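/- arXiv:0711.3338 — 2 statements merged into one kernel-verified Lean document; each statement's English description precedes it below -/
import Mathlib

section
/- For any two nonempty strings $a, b$ over a finite alphabet and any $k \ge 0$, $|a| \cdot H_k(a) + |b| \cdot H_k(b) \le |ab| \cdot H_k(ab)$. -/
/-- 0th-order empirical entropy of a string `s` over a finite alphabet. -/
noncomputable def H0 {α : Type*} [Fintype α] [DecidableEq α] (s : List α) : ℝ :=
  (s.length : ℝ)⁻¹ *
    ∑ a : α, (s.count a : ℝ) * Real.log ((s.length : ℝ) / (s.count a : ℝ))

/-- `follow w s` is the concatenation, in left-to-right order, of the characters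
that immediately follow occurrences of `w` in `s`. -/
def follow {α : Type*} [DecidableEq α] (w s : List α) : List α :=
  (List.range s.length).filterMap fun i =>
    if (s.drop i).take w.length = w then (s.drop (i + w.length)).head? else none

/-- `k`th-order empirical entropy: `H_k(s) = (1/|s|) ∑_{|w|=k} |w_s| H₀(w_s)`. -/
noncomputable def Hk {α : Type*} [Fintype α] [DecidableEq α] (k : ℕ) (s : List α) : ℝ :=
  (s.length : ℝ)⁻¹ *
    ∑ w : Fin k → α,
      ((follow (List.ofFn w) s).length : ℝ) * H0 (follow (List.ofFn w) s)

/-!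
`|s| · H₀(s) = ∑_c n_c log(|s| / n_c)` depends only on the count vector `n` of `s`, and as a
function of a nonnegative real vector it is superadditive (the log-sum inequality, coordinatewise)
and nonnegative, hence monotone. The characters following a context `w` in `a` and in `b` occur,
in order, among those following `w` in `ab`, so the count vectors of `w_a`, `w_b`, `w_{ab}`
satisfy `n(w_a) + n(w_b) ≤ n(w_{ab})`; summing over `w` gives the claim.
-/

open Real Finset

theorem Real.mul_log_div_le_mul_log_div {y t t' : ℝ} (hy : 0 ≤ y) (hyt : y ≤ t) (htt' : t ≤ t') :
    y * log (t / y) ≤ y * log (t' / y) := by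
  rcases hy.eq_or_lt with rfl | hy
  · simp
  exact mul_le_mul_of_nonneg_left
    (log_le_log (div_pos (hy.trans_le hyt) hy) (by gcongr)) hy.le

/-- The log-sum inequality for two terms. -/
theorem Real.mul_log_div_add_mul_log_div_le {x y s t : ℝ} (hx : 0 ≤ x) (hy : 0 ≤ y)
    (hxs : x ≤ s) (hyt : y ≤ t) :
    x * log (s / x) + y * log (t / y) ≤ (x + y) * log ((s + t) / (x + y)) := by
  rcases hx.eq_or_lt with rfl | hx
  · simpa using mul_log_div_le_mul_log_div hy hyt (le_add_of_nonneg_left hxs)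
  rcases hy.eq_or_lt with rfl | hy
  · simpa using mul_log_div_le_mul_log_div hx.le hxs (le_add_of_nonneg_right hyt)
  have hs : 0 < s := hx.trans_le hxs
  have ht : 0 < t := hy.trans_le hyt
  have hxy : 0 < x + y := by positivity
  have jensen := strictConcaveOn_log_Ioi.concaveOn.2 (Set.mem_Ioi.2 (div_pos hs hx))
    (Set.mem_Ioi.2 (div_pos ht hy)) (div_nonneg hx.le hxy.le) (div_nonneg hy.le hxy.le)
    (by field_simp)
  have hmean : x / (x + y) * (s / x) + y / (x + y) * (t / y) = (s + t) / (x + y) := by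
    field_simp
  simp only [smul_eq_mul, hmean] at jensen
  calc x * log (s / x) + y * log (t / y)
      = (x + y) * (x / (x + y) * log (s / x) + y / (x + y) * log (t / y)) := by
        field_simp
    _ ≤ (x + y) * log ((s + t) / (x + y)) := mul_le_mul_of_nonneg_left jensen hxy.le

/-- The total mass of `v` times the Shannon entropy of its normalization `v / ∑ v`. -/
noncomputable def unnormalizedEntropy {ι : Type*} [Fintype ι] (v : ι → ℝ) : ℝ :=
  ∑ i, v i * log ((∑ j, v j) / v i)

section unnormalizedEntropy

variable {ι : Type*} [Fintype ι] {f g : ι → ℝ}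

theorem unnormalizedEntropy_nonneg (hf : 0 ≤ f) : 0 ≤ unnormalizedEntropy f := by
  refine sum_nonneg fun i _ => ?_
  simpa using mul_log_div_le_mul_log_div (hf i) le_rfl
    (single_le_sum (fun j _ => hf j) (mem_univ i))

theorem unnormalizedEntropy_add_le (hf : 0 ≤ f) (hg : 0 ≤ g) :
    unnormalizedEntropy f + unnormalizedEntropy g ≤ unnormalizedEntropy (f + g) := by
  have hsum : ∑ j, (f + g) j = ∑ j, f j + ∑ j, g j := sum_add_distrib
  rw [unnormalizedEntropy, unnormalizedEntropy, unnormalizedEntropy, hsum, ← sum_add_distrib]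
  exact sum_le_sum fun i _ => mul_log_div_add_mul_log_div_le (hf i) (hg i)
    (single_le_sum (fun j _ => hf j) (mem_univ i)) (single_le_sum (fun j _ => hg j) (mem_univ i))

theorem unnormalizedEntropy_mono (hf : 0 ≤ f) (hfg : f ≤ g) :
    unnormalizedEntropy f ≤ unnormalizedEntropy g := by
  have hgf : 0 ≤ g - f := sub_nonneg.2 hfg
  calc unnormalizedEntropy f ≤ unnormalizedEntropy f + unnormalizedEntropy (g - f) :=
        le_add_of_nonneg_right (unnormalizedEntropy_nonneg hgf)
    _ ≤ unnormalizedEntropy g := by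
        simpa using unnormalizedEntropy_add_le hf hgf

end unnormalizedEntropy

section Strings

variable {α : Type*} [Fintype α] [DecidableEq α]

theorem length_mul_H0 (s : List α) :
    (s.length : ℝ) * H0 s = unnormalizedEntropy fun c => (s.count c : ℝ) := by
  rcases eq_or_ne s [] with rfl | hs
  · simp [H0, unnormalizedEntropy]
  have hlen : (s.length : ℝ) = ∑ c, (s.count c : ℝ) := by
    have := Multiset.sum_count_eq_card (m := (s : Multiset α)) (s := univ) fun a _ => mem_univ a
    simp only [Multiset.coe_count, Multiset.coe_card] at this
    exact_mod_cast this.symm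
  rw [H0, mul_inv_cancel_left₀ (by simpa using hs), unnormalizedEntropy, hlen]

theorem length_mul_H0_add_le_of_subperm {x y z : List α} (h : (x ++ y).Subperm z) :
    (x.length : ℝ) * H0 x + (y.length : ℝ) * H0 y ≤ (z.length : ℝ) * H0 z := by
  simp only [length_mul_H0]
  have hx : (0 : α → ℝ) ≤ fun c => (x.count c : ℝ) := fun c => Nat.cast_nonneg _
  have hy : (0 : α → ℝ) ≤ fun c => (y.count c : ℝ) := fun c => Nat.cast_nonneg _
  refine (unnormalizedEntropy_add_le hx hy).trans
    (unnormalizedEntropy_mono (add_nonneg hx hy) fun c => ?_)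
  simpa [← Nat.cast_add] using h.count_le c

end Strings

namespace List

theorem filterMap_sublist_filterMap {α β : Type*} {f g : α → Option β} {l : List α}
    (h : ∀ x ∈ l, ∀ b, f x = some b → g x = some b) : l.filterMap f <+ l.filterMap g := by
  induction l with
  | nil => exact .slnil
  | cons x l ih =>
    have ih := ih fun y hy => h y (mem_cons_of_mem x hy)
    rw [filterMap_cons, filterMap_cons]
    cases hfx : f x with
    | none => cases g x <;> [exact ih; exact ih.cons _]
    | some b => rw [h x mem_cons_self b hfx]; exact ih.cons_cons b

end List

section Follow

variable {α : Type*} [DecidableEq α]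

def followAt (w s : List α) (i : ℕ) : Option α :=
  if (s.drop i).take w.length = w then (s.drop (i + w.length)).head? else none

theorem follow_eq_filterMap (w s : List α) :
    follow w s = (List.range s.length).filterMap (followAt w s) := rfl

theorem followAt_append_of_eq_some {w a : List α} {i : ℕ} {c : α} (b : List α)
    (h : followAt w a i = some c) : followAt w (a ++ b) i = some c := by
  unfold followAt at h ⊢
  split_ifs at h with hw
  have hlen : i + w.length < a.length := by
    by_contra! hle
    simp [List.drop_eq_nil_of_le hle] at h
  rw [List.drop_append_of_le_length (by omega), List.take_append_of_le_length (by simp; omega),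
    if_pos hw, List.drop_append_of_le_length hlen.le, List.head?_append, h, Option.some_or]

theorem followAt_append_length_add (w a b : List α) (j : ℕ) :
    followAt w (a ++ b) (a.length + j) = followAt w b j := by
  simp only [followAt, List.drop_length_add_append, Nat.add_assoc]

theorem follow_append_sublist (w a b : List α) :
    (follow w a ++ follow w b).Sublist (follow w (a ++ b)) := by
  rw [follow_eq_filterMap, follow_eq_filterMap, follow_eq_filterMap, List.length_append,
    List.range_add, List.filterMap_append, List.filterMap_map]
  refine .append (List.filterMap_sublist_filterMap fun _ _ _ => followAt_append_of_eq_some b) ?_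
  simp only [Function.comp_def, followAt_append_length_add, List.Sublist.refl]

end Follow

theorem length_mul_Hk {α : Type*} [Fintype α] [DecidableEq α] (k : ℕ) (s : List α) :
    (s.length : ℝ) * Hk k s =
      ∑ w : Fin k → α, ((follow (List.ofFn w) s).length : ℝ) * H0 (follow (List.ofFn w) s) := by
  rcases eq_or_ne s [] with rfl | hs
  · simp [follow]
  rw [Hk, mul_inv_cancel_left₀ (by simpa using hs)]

theorem Hk_superadditive_general {α : Type*} [Fintype α] [DecidableEq α]
    (k : ℕ) (a b : List α) :
    (a.length : ℝ) * Hk k a + (b.length : ℝ) * Hk k b ≤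
      ((a ++ b).length : ℝ) * Hk k (a ++ b) := by
  rw [length_mul_Hk, length_mul_Hk, length_mul_Hk, ← sum_add_distrib]
  exact sum_le_sum fun w _ =>
    length_mul_H0_add_le_of_subperm (follow_append_sublist (List.ofFn w) a b).subperm

/-- Length times `k`th-order empirical entropy is superadditive. -/
theorem Hk_superadditive {α : Type*} [Fintype α] [DecidableEq α]
    (k : ℕ) (a b : List α) (ha : a ≠ []) (hb : b ≠ []) :
    (a.length : ℝ) * Hk k a + (b.length : ℝ) * Hk k b ≤
      ((a ++ b).length : ℝ) * Hk k (a ++ b) :=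
  Hk_superadditive_general k a b
end

section
/- Let $d$ be a string of length $\sigma^k$ over an alphabet of size $\sigma$ such that, reading $d$ cyclically, every string of length $k$ over the alphabet occurs exactly once among the $\sigma^k$ cyclic windows of length $k$. Then for every $i \ge 1$, every length-$k$ substring of the $i$-fold concatenation $d^i$ is followed by a uniquely determined character, and consequently $H_k(d^i) = 0$. -/
/-- The cyclic window of length `k` of `d` starting at position `j`
(indices taken modulo `d.length`). -/
def cycWin {α : Type*} [Inhabited α] (d : List α) (k j : ℕ) : List α :=
  List.ofFn fun t : Fin k => d.getD ((j + t.val) % d.length) default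

section Entropy

variable {α : Type*} [Fintype α] [DecidableEq α]

lemma H0_eq_zero_of_forall_eq {t : List α} (h : ∀ a ∈ t, ∀ b ∈ t, a = b) : H0 t = 0 := by
  unfold H0
  rw [Finset.sum_eq_zero, mul_zero]
  intro a _
  rcases Nat.eq_zero_or_pos (t.count a) with h0 | h0
  · simp [h0]
  · have ha : a ∈ t := List.count_pos_iff.mp h0
    have hc : t.count a = t.length :=
      List.count_eq_length.mpr fun b hb => (h b hb a ha).symm
    have hl : (t.length : ℝ) ≠ 0 := by exact_mod_cast (hc ▸ h0).ne'
    rw [hc, div_self hl, Real.log_one, mul_zero]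

omit [Fintype α] in
lemma exists_of_mem_follow {w s : List α} {a : α} (ha : a ∈ follow w s) :
    ∃ p, (s.drop p).take w.length = w ∧ s[p + w.length]? = some a := by
  simp only [follow, List.mem_filterMap, List.mem_range] at ha
  obtain ⟨p, -, hp⟩ := ha
  split_ifs at hp with hw
  exact ⟨p, hw, by rwa [List.head?_drop] at hp⟩

lemma Hk_eq_zero_of_follower_unique {k : ℕ} {s : List α}
    (h : ∀ p q : ℕ, p + k < s.length → q + k < s.length →
      (s.drop p).take k = (s.drop q).take k → s[p + k]? = s[q + k]?) :
    Hk k s = 0 := by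
  unfold Hk
  rw [Finset.sum_eq_zero, mul_zero]
  intro w _
  rw [H0_eq_zero_of_forall_eq, mul_zero]
  intro a ha b hb
  obtain ⟨p, hpw, hpa⟩ := exists_of_mem_follow ha
  obtain ⟨q, hqw, hqb⟩ := exists_of_mem_follow hb
  rw [List.length_ofFn] at hpw hqw hpa hqb
  have hp : p + k < s.length := (List.getElem?_eq_some_iff.mp hpa).1
  have hq : q + k < s.length := (List.getElem?_eq_some_iff.mp hqb).1
  simpa [hpa, hqb] using h p q hp hq (hpw.trans hqw.symm)

end Entropy

section Power

variable {α : Type*}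

lemma length_flatten_replicate (d : List α) (i : ℕ) :
    (List.replicate i d).flatten.length = i * d.length := by
  simp only [List.length_flatten, List.map_replicate, List.sum_replicate, smul_eq_mul]

lemma getElem?_flatten_replicate (d : List α) {i j : ℕ} (hj : j < i * d.length) :
    (List.replicate i d).flatten[j]? = d[j % d.length]? := by
  induction i generalizing j with
  | zero => omega
  | succ n ih =>
    rw [List.replicate_succ, List.flatten_cons, List.getElem?_append]
    rw [Nat.succ_mul] at hj
    split_ifs with h
    · rw [Nat.mod_eq_of_lt h]
    · rw [ih (by omega), ← Nat.mod_eq_sub_mod (not_lt.mp h)]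

lemma take_drop_flatten_replicate [Inhabited α] (d : List α) {i k p : ℕ}
    (hp : p + k ≤ i * d.length) :
    ((List.replicate i d).flatten.drop p).take k = cycWin d k (p % d.length) := by
  apply List.ext_getElem?
  intro n
  by_cases hn : n < k
  · have hL : 0 < d.length := Nat.pos_of_mul_pos_left (a := i) (by omega)
    have hmod : (p % d.length + n) % d.length = (p + n) % d.length := by
      rw [Nat.mod_add_mod]
    rw [List.getElem?_take_of_lt hn, List.getElem?_drop,
      getElem?_flatten_replicate d (by omega), cycWin, List.getElem?_ofFn,
      dif_pos hn, hmod, List.getD_eq_getElem _ _ (Nat.mod_lt _ hL),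
      List.getElem?_eq_getElem (Nat.mod_lt _ hL)]
  · simp [cycWin, hn]

end Power

section DeBruijn

variable {α : Type*} [Inhabited α] {d : List α} {k : ℕ}

lemma mod_eq_of_cycWin_eq
    (hdb : ∀ w : Fin k → α, ∃! j : Fin d.length, cycWin d k j.val = List.ofFn w) {a b : ℕ}
    (h : cycWin d k (a % d.length) = cycWin d k (b % d.length)) :
    a % d.length = b % d.length := by
  have hL : 0 < d.length := (hdb default).exists.choose.pos
  have key := (hdb fun t => d.getD ((a % d.length + t.val) % d.length) default).unique
    (y₁ := ⟨a % d.length, Nat.mod_lt _ hL⟩) (y₂ := ⟨b % d.length, Nat.mod_lt _ hL⟩) rfl h.symm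
  exact congrArg Fin.val key

lemma getElem?_flatten_replicate_add_eq_of_take_drop_eq
    (hdb : ∀ w : Fin k → α, ∃! j : Fin d.length, cycWin d k j.val = List.ofFn w) {i p q : ℕ}
    (hp : p + k < (List.replicate i d).flatten.length)
    (hq : q + k < (List.replicate i d).flatten.length)
    (h : ((List.replicate i d).flatten.drop p).take k =
      ((List.replicate i d).flatten.drop q).take k) :
    (List.replicate i d).flatten[p + k]? = (List.replicate i d).flatten[q + k]? := by
  rw [length_flatten_replicate] at hp hq
  rw [take_drop_flatten_replicate d hp.le, take_drop_flatten_replicate d hq.le] at h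
  have hpq : p ≡ q [MOD d.length] := mod_eq_of_cycWin_eq hdb h
  rw [getElem?_flatten_replicate d hp, getElem?_flatten_replicate d hq, hpq.add_right k]

end DeBruijn

theorem deBruijn_power_Hk_eq_zero_general {α : Type*} [Fintype α] [DecidableEq α] [Inhabited α]
    (k : ℕ) (d : List α)
    (hdb : ∀ w : Fin k → α, ∃! j : Fin d.length, cycWin d k j.val = List.ofFn w)
    (i : ℕ) :
    (∀ p q : ℕ, p + k < ((List.replicate i d).flatten).length →
        q + k < ((List.replicate i d).flatten).length →
        (((List.replicate i d).flatten).drop p).take k =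
          (((List.replicate i d).flatten).drop q).take k →
        ((List.replicate i d).flatten)[p + k]? =
          ((List.replicate i d).flatten)[q + k]?) ∧
      Hk k ((List.replicate i d).flatten) = 0 := by
  have hfollow := fun p q ↦
    getElem?_flatten_replicate_add_eq_of_take_drop_eq (i := i) (p := p) (q := q) hdb
  exact ⟨hfollow, Hk_eq_zero_of_follower_unique hfollow⟩

/-- If `d` has length `σ^k` and, read cyclically, every length-`k` string occurs
exactly once among its cyclic windows, then in every power `d^i` each length-`k`
substring is followed by a uniquely determined character, and `H_k(d^i) = 0`. -/
theorem deBruijn_power_Hk_eq_zero {α : Type*} [Fintype α] [DecidableEq α] [Inhabited α]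
    (k : ℕ) (hk : 1 ≤ k) (d : List α) (hlen : d.length = Fintype.card α ^ k)
    (hdb : ∀ w : Fin k → α, ∃! j : Fin d.length, cycWin d k j.val = List.ofFn w)
    (i : ℕ) (hi : 1 ≤ i) :
    (∀ p q : ℕ, p + k < ((List.replicate i d).flatten).length →
        q + k < ((List.replicate i d).flatten).length →
        (((List.replicate i d).flatten).drop p).take k =
          (((List.replicate i d).flatten).drop q).take k →
        ((List.replicate i d).flatten)[p + k]? =
          ((List.replicate i d).flatten)[q + k]?) ∧
      Hk k ((List.replicate i d).flatten) = 0 :=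
  deBruijn_power_Hk_eq_zero_general k d hdb i
end
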